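/- arXiv:1809.05340 — 5 statements merged into one kernel-verified Lean document; each statement's English description precedes it below -/
import Mathlib

section
/- First fact about clearing prices: if a price function θ supports a feasible allocation a, then a is efficient, i.e. V(a;v) ≥ V(a';v) for every feasible allocation a'. -/
open Finset

/-- A bundle is a subset of the `m` items. -/
abbrev Bundle (m : ℕ) := Finset (Fin m)

/-- An allocation is feasible if its bundles are pairwise disjoint. -/
def Feasible {m n : ℕ} (a : Fin n → Bundle m) : Prop :=
  ∀ i j : Fin n, i ≠ j → Disjoint (a i) (a j)

/-- The (finite) set `ℱ` of feasible allocations. -/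
noncomputable def FeasSet (m n : ℕ) : Finset (Fin n → Bundle m) :=
  @Finset.filter _ (fun a => Feasible a) (Classical.decPred _) Finset.univ

lemma FeasSet_nonempty (m n : ℕ) : (FeasSet m n).Nonempty :=
  ⟨fun _ => ∅, by
    simp only [FeasSet, Finset.mem_filter, Finset.mem_univ, true_and]
    intro i j _
    simp⟩

/-- Bidder `i`'s indirect utility `U(θ; v_i) = max_{x ∈ 𝒳} (v_i(x) - θ(x))`. -/
noncomputable def U {m : ℕ} (θ : Bundle m → ℝ) (vi : Bundle m → ℝ) : ℝ :=
  Finset.univ.sup' Finset.univ_nonempty (fun x : Bundle m => vi x - θ x)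

/-- The seller's indirect revenue `R(θ) = max_{a ∈ ℱ} Σ_i θ(a_i)`. -/
noncomputable def R (m n : ℕ) (θ : Bundle m → ℝ) : ℝ :=
  (FeasSet m n).sup' (FeasSet_nonempty m n) (fun a => ∑ i, θ (a i))

/-- The total value `V(a; v) = Σ_i v_i(a_i)`. -/
def V {m n : ℕ} (a : Fin n → Bundle m) (v : Fin n → Bundle m → ℝ) : ℝ :=
  ∑ i, v i (a i)

/-- `W(θ; v) = Σ_i U(θ; v_i) + R(θ)`. -/
noncomputable def W {m n : ℕ} (θ : Bundle m → ℝ) (v : Fin n → Bundle m → ℝ) : ℝ :=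
  (∑ i, U θ (v i)) + R m n θ

/-- The optimal social welfare `max_{a ∈ ℱ} V(a; v)`. -/
noncomputable def maxV {m n : ℕ} (v : Fin n → Bundle m → ℝ) : ℝ :=
  (FeasSet m n).sup' (FeasSet_nonempty m n) (fun a => V a v)

/-- The clearing potential `Ŵ(θ; v) = W(θ; v) - max_{a ∈ ℱ} V(a; v)`. -/
noncomputable def What {m n : ℕ} (θ : Bundle m → ℝ) (v : Fin n → Bundle m → ℝ) : ℝ :=
  W θ v - maxV v

/-- Prices `θ` support a feasible allocation `a`. -/
def Supports {m n : ℕ} (θ : Bundle m → ℝ) (v : Fin n → Bundle m → ℝ)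
    (a : Fin n → Bundle m) : Prop :=
  Feasible a ∧ (∀ i : Fin n, ∀ x : Bundle m, v i x - θ x ≤ v i (a i) - θ (a i)) ∧
  (∀ a' : Fin n → Bundle m, Feasible a' → ∑ i, θ (a' i) ≤ ∑ i, θ (a i))

/-- First fact: if `θ` supports a feasible allocation `a`,
then `a` is efficient. -/
theorem supports_implies_efficient {m n : ℕ} (hm : 1 ≤ m) (hn : 1 ≤ n)
    (θ : Bundle m → ℝ) (v : Fin n → Bundle m → ℝ) (a : Fin n → Bundle m)
    (ha : Supports θ v a) :
    ∀ a' : Fin n → Bundle m, Feasible a' → V a v ≥ V a' v := by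
  obtain ⟨hfeas, hdem, hrev⟩ := ha
  intro a' ha'
  have h1 : ∑ i, (v i (a' i) - θ (a' i)) ≤ ∑ i, (v i (a i) - θ (a i)) :=
    Finset.sum_le_sum fun i _ => hdem i (a' i)
  have h2 := hrev a' ha'
  simp only [V, Finset.sum_sub_distrib] at h1 ⊢
  linarith
end

section
/- Second fact about clearing prices: if a price function θ supports some feasible allocation a, then θ supports every efficient allocation; that is, for any feasible a' with V(a';v) ≥ V(a'';v) for all feasible a'', the prices θ also support a'. -/
open Finset

/-- Second fact: if `θ` supports some feasible allocation `a`,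
then `θ` supports every efficient allocation. -/
theorem supports_every_efficient {m n : ℕ} (hm : 1 ≤ m) (hn : 1 ≤ n)
    (θ : Bundle m → ℝ) (v : Fin n → Bundle m → ℝ) (a : Fin n → Bundle m)
    (ha : Supports θ v a) :
    ∀ a' : Fin n → Bundle m, Feasible a' →
      (∀ a'' : Fin n → Bundle m, Feasible a'' → V a' v ≥ V a'' v) →
        Supports θ v a' := by
  obtain ⟨hfa, hmax, hrev⟩ := ha
  intro a' hfa' heff
  -- per-bidder inequality
  have hterm : ∀ i : Fin n, v i (a' i) - θ (a' i) ≤ v i (a i) - θ (a i) :=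
    fun i => hmax i (a' i)
  have hsum : ∑ i, (v i (a' i) - θ (a' i)) ≤ ∑ i, (v i (a i) - θ (a i)) :=
    Finset.sum_le_sum (fun i _ => hterm i)
  have hrev' : ∑ i, θ (a' i) ≤ ∑ i, θ (a i) := hrev a' hfa'
  have hVle : V a' v ≤ V a v := by
    have := add_le_add hsum hrev'
    simp only [V, Finset.sum_sub_distrib] at *
    linarith
  have hVeq : V a' v = V a v := le_antisymm hVle (heff a hfa)
  have hreveq : ∑ i, θ (a' i) = ∑ i, θ (a i) := by
    have : ∑ i, (v i (a' i) - θ (a' i)) ≤ ∑ i, (v i (a' i) - θ (a' i)) := le_refl _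
    simp only [V, Finset.sum_sub_distrib] at hsum hVeq ⊢
    linarith
  have hsumeq : ∑ i, (v i (a' i) - θ (a' i)) = ∑ i, (v i (a i) - θ (a i)) := by
    simp only [V] at hVeq
    simp only [Finset.sum_sub_distrib]
    linarith
  have htermeq : ∀ i ∈ Finset.univ, v i (a' i) - θ (a' i) = v i (a i) - θ (a i) :=
    (Finset.sum_eq_sum_iff_of_le (fun i _ => hterm i)).mp hsumeq
  refine ⟨hfa', fun i x => ?_, fun a'' hfa'' => (hrev a'' hfa'').trans hreveq.ge⟩
  calc v i x - θ x ≤ v i (a i) - θ (a i) := hmax i x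
    _ = v i (a' i) - θ (a' i) := (htermeq i (Finset.mem_univ i)).symm
end

section
/- Third fact about clearing prices: clearing prices minimize W(·;v); that is, if θ* is a clearing price function for the valuation profile v (it supports some feasible allocation), then for every price function θ one has W(θ*;v) ≤ W(θ;v). -/
open Finset

/-- Third fact: clearing prices minimize `W(·; v)`. -/
theorem clearing_prices_minimize_W {m n : ℕ} (hm : 1 ≤ m) (hn : 1 ≤ n)
    (θstar : Bundle m → ℝ) (v : Fin n → Bundle m → ℝ)
    (hclear : ∃ a : Fin n → Bundle m, Supports θstar v a) :
    ∀ θ : Bundle m → ℝ, W θstar v ≤ W θ v := by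
  rintro θ
  obtain ⟨a, hfeas, hmax, hrev⟩ := hclear
  have ha : a ∈ FeasSet m n := by
    simp only [FeasSet, Finset.mem_filter, Finset.mem_univ, true_and]; exact hfeas
  have hUstar : ∀ i, U θstar (v i) = v i (a i) - θstar (a i) := by
    intro i
    unfold U
    apply le_antisymm
    · exact Finset.sup'_le _ _ (fun x _ => hmax i x)
    · exact Finset.le_sup' (fun x => v i x - θstar x) (Finset.mem_univ (a i))
  have hRstar : R m n θstar = ∑ i, θstar (a i) := by
    unfold R
    apply le_antisymm
    · apply Finset.sup'_le
      intro a' ha'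
      simp only [FeasSet, Finset.mem_filter] at ha'
      exact hrev a' ha'.2
    · exact Finset.le_sup' (fun a' => ∑ i, θstar (a' i)) ha
  have hWstar : W θstar v = V a v := by
    simp [W, hUstar, hRstar, V, ← Finset.sum_add_distrib]
  have hU : ∀ i, v i (a i) - θ (a i) ≤ U θ (v i) := fun i =>
    Finset.le_sup' (fun x => v i x - θ x) (Finset.mem_univ (a i))
  have hR : ∑ i, θ (a i) ≤ R m n θ := Finset.le_sup' (fun a' => ∑ i, θ (a' i)) ha
  have : V a v ≤ W θ v := by
    have h1 : ∑ i, (v i (a i) - θ (a i)) ≤ ∑ i, U θ (v i) :=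
      Finset.sum_le_sum (fun i _ => hU i)
    have : V a v = ∑ i, (v i (a i) - θ (a i)) + ∑ i, θ (a i) := by
      simp [V, ← Finset.sum_add_distrib]
    rw [this, W]
    exact add_le_add h1 hR
  linarith [hWstar]
end

section
/- If clearing prices exist for the valuation profile v, then the minimizers of W(·;v) are exactly the clearing prices: assuming some price function θ* supports a feasible allocation, a price function θ satisfies W(θ;v) ≤ W(θ';v) for all price functions θ' if and only if θ is a clearing price function for v. -/
open Finset

lemma le_U' {m : ℕ} (θ vi : Bundle m → ℝ) (x : Bundle m) : vi x - θ x ≤ U θ vi := by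
  unfold U
  exact Finset.le_sup' (fun x => vi x - θ x) (Finset.mem_univ x)

lemma mem_FeasSet_iff {m n : ℕ} {a : Fin n → Bundle m} : a ∈ FeasSet m n ↔ Feasible a := by
  unfold FeasSet
  rw [@Finset.mem_filter _ _ (Classical.decPred _)]
  exact ⟨fun h => h.2, fun h => ⟨Finset.mem_univ a, h⟩⟩

lemma mem_FeasSet' {m n : ℕ} {a : Fin n → Bundle m} (h : Feasible a) : a ∈ FeasSet m n :=
  mem_FeasSet_iff.mpr h

lemma le_R' {m n : ℕ} (θ : Bundle m → ℝ) {a : Fin n → Bundle m} (h : Feasible a) :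
    ∑ i, θ (a i) ≤ R m n θ := by
  unfold R
  exact Finset.le_sup' (fun a => ∑ i, θ (a i)) (mem_FeasSet' h)

lemma V_le_W' {m n : ℕ} (θ : Bundle m → ℝ) (v : Fin n → Bundle m → ℝ)
    {a : Fin n → Bundle m} (h : Feasible a) : V a v ≤ W θ v := by
  have h2 := le_R' (n := n) θ h
  calc V a v = ∑ i, v i (a i) := rfl
    _ ≤ ∑ i, (U θ (v i) + θ (a i)) := by
        refine Finset.sum_le_sum fun i _ => ?_
        have := le_U' θ (v i) (a i); linarith
    _ = (∑ i, U θ (v i)) + ∑ i, θ (a i) := Finset.sum_add_distrib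
    _ ≤ W θ v := by unfold W; linarith

lemma maxV_le_W' {m n : ℕ} (θ : Bundle m → ℝ) (v : Fin n → Bundle m → ℝ) :
    maxV v ≤ W θ v := by
  apply Finset.sup'_le
  intro a ha
  exact V_le_W' θ v (mem_FeasSet_iff.mp ha)

lemma W_eq_of_supports {m n : ℕ} {θ : Bundle m → ℝ} {v : Fin n → Bundle m → ℝ}
    {a : Fin n → Bundle m} (hs : Supports θ v a) : W θ v = maxV v := by
  obtain ⟨hf, hu, hr⟩ := hs
  have hU : ∀ i, U θ (v i) = v i (a i) - θ (a i) := fun i => by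
    refine le_antisymm ?_ (le_U' θ (v i) (a i))
    unfold U
    exact Finset.sup'_le _ _ fun x _ => hu i x
  have hR : R m n θ = ∑ i, θ (a i) := by
    refine le_antisymm ?_ (le_R' θ hf)
    unfold R
    exact Finset.sup'_le _ _ fun a' ha' => hr a' (mem_FeasSet_iff.mp ha')
  have hW : W θ v = V a v := by
    unfold W V
    rw [hR, Finset.sum_congr rfl fun i _ => hU i, Finset.sum_sub_distrib]
    ring
  refine le_antisymm ?_ (maxV_le_W' θ v)
  rw [hW]
  unfold maxV
  exact Finset.le_sup' (fun a => V a v) (mem_FeasSet' hf)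

/-- if clearing prices exist for `v`, then the minimizers of `W(·; v)` are
exactly the clearing prices. -/
theorem minimizers_of_W_are_clearing {m n : ℕ} (hm : 1 ≤ m) (hn : 1 ≤ n)
    (v : Fin n → Bundle m → ℝ)
    (hexists : ∃ θstar : Bundle m → ℝ, ∃ a : Fin n → Bundle m, Supports θstar v a) :
    ∀ θ : Bundle m → ℝ,
      (∀ θ' : Bundle m → ℝ, W θ v ≤ W θ' v) ↔ (∃ a : Fin n → Bundle m, Supports θ v a) := by
  obtain ⟨θs, as, hss⟩ := hexists
  have hstar : W θs v = maxV v := W_eq_of_supports hss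
  intro θ
  constructor
  · intro hmin
    have hWeq : W θ v = maxV v :=
      le_antisymm (hstar ▸ hmin θs) (maxV_le_W' θ v)
    -- pick a value-maximizing allocation
    obtain ⟨a, haF, ha⟩ := Finset.exists_mem_eq_sup' (FeasSet_nonempty m n) (fun a => V a v)
    have hfeas : Feasible a := mem_FeasSet_iff.mp haF
    have hVa : V a v = maxV v := ha.symm
    -- sum of slacks is zero
    have hsum : (∑ i, (U θ (v i) - (v i (a i) - θ (a i)))) +
        (R m n θ - ∑ i, θ (a i)) = 0 := by
      have : W θ v = V a v := by rw [hWeq, hVa]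
      unfold W V at this
      rw [Finset.sum_sub_distrib, Finset.sum_sub_distrib]
      linarith
    have hd : ∀ i, 0 ≤ U θ (v i) - (v i (a i) - θ (a i)) := fun i => by
      have := le_U' θ (v i) (a i); linarith
    have he : 0 ≤ R m n θ - ∑ i, θ (a i) := by
      have := le_R' (n := n) θ hfeas; linarith
    have hdsum : 0 ≤ ∑ i, (U θ (v i) - (v i (a i) - θ (a i))) :=
      Finset.sum_nonneg fun i _ => hd i
    have he0 : R m n θ = ∑ i, θ (a i) := by linarith
    have hd0 : ∀ i, U θ (v i) = v i (a i) - θ (a i) := by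
      intro i
      have hle : U θ (v i) - (v i (a i) - θ (a i)) ≤
          ∑ j, (U θ (v j) - (v j (a j) - θ (a j))) :=
        Finset.single_le_sum (fun j _ => hd j) (Finset.mem_univ i)
      have := hd i
      linarith
    refine ⟨a, hfeas, fun i x => ?_, fun a' ha' => ?_⟩
    · have := le_U' θ (v i) x
      rw [hd0 i] at this
      exact this
    · rw [← he0]
      exact le_R' θ ha'
  · intro ⟨a, hs⟩ θ'
    rw [W_eq_of_supports hs]
    exact maxV_le_W' θ' v
end

section
/- Proposition 1 (convergence of the relaxed price density to the clearing-price density): let θ_p(x) = Σ_{j∈x} p_j for item-price vectors p ∈ ℝ^m with p ≥ 0. Define N_λ(p) = ∫_𝒱 e^{−λ·Ŵ(θ_p;v)} Q(v) dv, N(p) = ∫_𝒱 1{Ŵ(θ_p;v)=0} Q(v) dv, Z_λ = ∫_{p≥0} N_λ(p) dp, and Z = ∫_{p≥0} N(p) dp. Assume that for some λ₀ > 0 the function (p,v) ↦ e^{−λ₀·Ŵ(θ_p;v)} Q(v) is integrable on {p ∈ ℝ^m : p ≥ 0} × 𝒱, and that 0 < Z < ∞. Then for every p ≥ 0, lim_{λ→∞}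 N_λ(p)/Z_λ = N(p)/Z; in the paper's notation, lim_{λ→∞} P_λ(θ_p) = P(θ_p). -/
open Finset

open MeasureTheory

/-- The space `𝒱` of valuation profiles, as the finite-dimensional real vector space of
maps `({1,…,n} × 𝒳) → ℝ`, equipped with its Borel σ-algebra and Lebesgue measure. -/
abbrev VSpace (m n : ℕ) := (Fin n × Bundle m) → ℝ

/-- Reading a point of `𝒱` as a valuation profile. -/
def toProfile {m n : ℕ} (v : VSpace m n) : Fin n → Bundle m → ℝ :=
  fun i x => v (i, x)

/-- The bundle price function `θ_p(x) = Σ_{j ∈ x} p_j` induced by item prices `p`. -/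
def priceOf {m : ℕ} (p : Fin m → ℝ) : Bundle m → ℝ :=
  fun x => ∑ j ∈ x, p j

/-
As `λ → ∞`, `e^{-λ Ŵ(θ_p;v)}` decreases pointwise to `1{Ŵ(θ_p;v) = 0}` because `Ŵ ≥ 0`. Dominated
convergence in `v` (dominated by `|Q|`) gives `N_λ(p) → N(p)` for every `p`; dominated convergence
in `p`, dominated by `p ↦ ∫ |e^{-λ₀Ŵ(θ_p;v)} Q(v)| dv`, which is integrable by the joint
integrability hypothesis, gives `Z_λ → Z`. Since `Z > 0`, the quotients converge.
-/

open Filter Topology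

lemma What_nonneg {m n : ℕ} (θ : Bundle m → ℝ) (v : Fin n → Bundle m → ℝ) :
    0 ≤ What θ v := by
  rw [What, sub_nonneg, maxV]
  refine Finset.sup'_le _ _ fun a ha => ?_
  have hU : ∀ i, v i (a i) - θ (a i) ≤ U θ (v i) := fun i =>
    Finset.le_sup' (fun x : Bundle m => v i x - θ x) (Finset.mem_univ (a i))
  have hR : ∑ i, θ (a i) ≤ R m n θ := Finset.le_sup' (fun a => ∑ i, θ (a i)) ha
  calc V a v = ∑ i, (v i (a i) - θ (a i)) + ∑ i, θ (a i) := by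
        rw [V, ← Finset.sum_add_distrib]; simp
    _ ≤ (∑ i, U θ (v i)) + R m n θ := add_le_add (Finset.sum_le_sum fun i _ => hU i) hR

lemma continuous_What_priceOf_toProfile {m n : ℕ} :
    Continuous (fun q : (Fin m → ℝ) × VSpace m n => What (priceOf q.1) (toProfile q.2)) := by
  have hprice : ∀ x : Bundle m,
      Continuous (fun q : (Fin m → ℝ) × VSpace m n => priceOf q.1 x) := fun x =>
    continuous_finsetSum _ fun j _ => (continuous_apply j).comp continuous_fst
  have hval : ∀ (i : Fin n) (x : Bundle m),
      Continuous (fun q : (Fin m → ℝ) × VSpace m n => toProfile q.2 i x) := fun i x =>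
    (continuous_apply (i, x)).comp continuous_snd
  unfold What W U R maxV V
  refine ((continuous_finsetSum _ fun i _ => ?_).add ?_).sub ?_
  · exact Continuous.finset_sup'_apply _ fun x _ => (hval i x).sub (hprice x)
  · exact Continuous.finset_sup'_apply _ fun a _ =>
      continuous_finsetSum _ fun i _ => hprice (a i)
  · exact Continuous.finset_sup'_apply _ fun a _ =>
      continuous_finsetSum _ fun i _ => hval i (a i)

lemma tendsto_exp_neg_mul_atTop {w : ℝ} (hw : 0 ≤ w) :
    Tendsto (fun lam : ℝ => Real.exp (-lam * w)) atTop (𝓝 (if w = 0 then 1 else 0)) := by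
  rcases hw.eq_or_lt with rfl | hw
  · simp
  · rw [if_neg hw.ne']
    refine Real.tendsto_exp_atBot.comp ?_
    simpa only [neg_mul, ← mul_neg, id] using tendsto_id.atTop_mul_const_of_neg (neg_lt_zero.mpr hw)

lemma norm_exp_neg_mul_mul_le {w lam₀ lam : ℝ} (q : ℝ) (hw : 0 ≤ w) (h : lam₀ ≤ lam) :
    ‖Real.exp (-lam * w) * q‖ ≤ ‖Real.exp (-lam₀ * w) * q‖ := by
  simp only [norm_mul, Real.norm_eq_abs, Real.abs_exp]
  gcongr

section DominatedConvergence

variable {α β : Type*} [MeasurableSpace α] [MeasurableSpace β]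

lemma tendsto_integral_exp_neg_mul_mul {μ : Measure α} {w Q : α → ℝ} (hw : Measurable w)
    (hw0 : ∀ x, 0 ≤ w x) (hQ : Integrable Q μ) :
    Tendsto (fun lam : ℝ => ∫ x, Real.exp (-lam * w x) * Q x ∂μ) atTop
      (𝓝 (∫ x, (if w x = 0 then 1 else 0) * Q x ∂μ)) := by
  refine tendsto_integral_filter_of_dominated_convergence (fun x => ‖Q x‖)
    (Eventually.of_forall fun lam => ?_) ?_ hQ.norm
    (Eventually.of_forall fun x => (tendsto_exp_neg_mul_atTop (hw0 x)).mul_const (Q x))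
  · exact (by fun_prop : Measurable fun x => Real.exp (-lam * w x)).aestronglyMeasurable.mul
      hQ.aestronglyMeasurable
  · filter_upwards [eventually_ge_atTop 0] with lam hlam
    refine Eventually.of_forall fun x => ?_
    simpa using norm_exp_neg_mul_mul_le (Q x) (hw0 x) hlam

lemma tendsto_integral_integral_exp_neg_mul_mul {μ : Measure α} {ν : Measure β}
    [SFinite μ] [SFinite ν] {w : α × β → ℝ} {Q : β → ℝ} (hw : Measurable w)
    (hw0 : ∀ q, 0 ≤ w q) (hQ : Integrable Q ν) {lam₀ : ℝ}
    (hint : Integrable (fun q : α × β => Real.exp (-lam₀ * w q) * Q q.2) (μ.prod ν)) :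
    Tendsto (fun lam : ℝ => ∫ x, ∫ y, Real.exp (-lam * w (x, y)) * Q y ∂ν ∂μ) atTop
      (𝓝 (∫ x, ∫ y, (if w (x, y) = 0 then 1 else 0) * Q y ∂ν ∂μ)) := by
  refine tendsto_integral_filter_of_dominated_convergence
    (fun x => ∫ y, ‖Real.exp (-lam₀ * w (x, y)) * Q y‖ ∂ν)
    (Eventually.of_forall fun lam => ?_) ?_ hint.integral_norm_prod_left
    (Eventually.of_forall fun x => tendsto_integral_exp_neg_mul_mul
      (hw.comp measurable_prodMk_left) (fun y => hw0 (x, y)) hQ)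
  · refine AEStronglyMeasurable.integral_prod_right' (f := fun q : α × β =>
      Real.exp (-lam * w q) * Q q.2) ?_
    exact (by fun_prop : Measurable fun q => Real.exp (-lam * w q)).aestronglyMeasurable.mul
      hQ.aestronglyMeasurable.comp_snd
  · filter_upwards [eventually_ge_atTop lam₀] with lam hlam
    filter_upwards [hint.prod_right_ae] with x hx
    refine (norm_integral_le_integral_norm _).trans
      (integral_mono_of_nonneg (Eventually.of_forall fun y => norm_nonneg _) hx.norm
        (Eventually.of_forall fun y => ?_))
    exact norm_exp_neg_mul_mul_le (Q y) (hw0 (x, y)) hlam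

end DominatedConvergence

theorem relaxed_price_density_convergence_general {m n : ℕ}
    (Q : VSpace m n → ℝ) (hQint : Integrable Q)
    (Nl : ℝ → (Fin m → ℝ) → ℝ)
    (hNl : ∀ lam p, Nl lam p =
      ∫ v : VSpace m n, Real.exp (-lam * What (priceOf p) (toProfile v)) * Q v)
    (N : (Fin m → ℝ) → ℝ)
    (hN : ∀ p, N p =
      ∫ v : VSpace m n, (if What (priceOf p) (toProfile v) = 0 then (1 : ℝ) else 0) * Q v)
    (lam0 : ℝ)
    (hjoint : IntegrableOn
      (fun q : (Fin m → ℝ) × VSpace m n =>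
        Real.exp (-lam0 * What (priceOf q.1) (toProfile q.2)) * Q q.2)
      ({p : Fin m → ℝ | ∀ j, 0 ≤ p j} ×ˢ (Set.univ : Set (VSpace m n))))
    (hZpos : 0 < ∫ p in {p : Fin m → ℝ | ∀ j, 0 ≤ p j}, N p) :
    ∀ p : Fin m → ℝ, (∀ j, 0 ≤ p j) →
      Filter.Tendsto
        (fun lam : ℝ =>
          Nl lam p / ∫ p' in {p' : Fin m → ℝ | ∀ j, 0 ≤ p' j}, Nl lam p')
        Filter.atTop
        (nhds (N p / ∫ p' in {p' : Fin m → ℝ | ∀ j, 0 ≤ p' j}, N p')) := by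
  intro p _
  have hw := continuous_What_priceOf_toProfile (m := m) (n := n) |>.measurable
  have hw0 : ∀ q : (Fin m → ℝ) × VSpace m n, 0 ≤ What (priceOf q.1) (toProfile q.2) :=
    fun q => What_nonneg _ _
  rw [IntegrableOn, Measure.volume_eq_prod, ← Measure.prod_restrict,
    Measure.restrict_univ] at hjoint
  have hNl_lim := tendsto_integral_exp_neg_mul_mul (hw.comp measurable_prodMk_left)
    (fun v => hw0 (p, v)) hQint
  have hZl_lim := tendsto_integral_integral_exp_neg_mul_mul hw hw0 hQint hjoint
  simp_rw [hN] at hZpos ⊢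
  simp_rw [hNl]
  exact hNl_lim.div hZl_lim hZpos.ne'

/-- Proposition 1: with `N_λ(p) = ∫ e^{-λŴ(θ_p;v)} Q(v) dv`,
`N(p) = ∫ 1{Ŵ(θ_p;v)=0} Q(v) dv`, `Z_λ = ∫_{p≥0} N_λ(p) dp` and `Z = ∫_{p≥0} N(p) dp`,
assuming joint integrability of `(p,v) ↦ e^{-λ₀Ŵ(θ_p;v)} Q(v)` on `{p ≥ 0} × 𝒱` for some
`λ₀ > 0`, integrability of `N` on `{p ≥ 0}` (i.e. `Z < ∞`) and `0 < Z`, we have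
`lim_{λ→∞} N_λ(p)/Z_λ = N(p)/Z` for every `p ≥ 0`. -/
theorem relaxed_price_density_convergence {m n : ℕ} (hm : 1 ≤ m) (hn : 1 ≤ n)
    (Q : VSpace m n → ℝ) (hQ0 : ∀ v, 0 ≤ Q v) (hQint : Integrable Q)
    (Nl : ℝ → (Fin m → ℝ) → ℝ)
    (hNl : ∀ lam p, Nl lam p =
      ∫ v : VSpace m n, Real.exp (-lam * What (priceOf p) (toProfile v)) * Q v)
    (N : (Fin m → ℝ) → ℝ)
    (hN : ∀ p, N p =
      ∫ v : VSpace m n, (if What (priceOf p) (toProfile v) = 0 then (1 : ℝ) else 0) * Q v)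
    (lam0 : ℝ) (hlam0 : 0 < lam0)
    (hjoint : IntegrableOn
      (fun q : (Fin m → ℝ) × VSpace m n =>
        Real.exp (-lam0 * What (priceOf q.1) (toProfile q.2)) * Q q.2)
      ({p : Fin m → ℝ | ∀ j, 0 ≤ p j} ×ˢ (Set.univ : Set (VSpace m n))))
    (hNint : IntegrableOn N {p : Fin m → ℝ | ∀ j, 0 ≤ p j})
    (hZpos : 0 < ∫ p in {p : Fin m → ℝ | ∀ j, 0 ≤ p j}, N p) :
    ∀ p : Fin m → ℝ, (∀ j, 0 ≤ p j) →
      Filter.Tendsto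
        (fun lam : ℝ =>
          Nl lam p / ∫ p' in {p' : Fin m → ℝ | ∀ j, 0 ≤ p' j}, Nl lam p')
        Filter.atTop
        (nhds (N p / ∫ p' in {p' : Fin m → ℝ | ∀ j, 0 ≤ p' j}, N p')) :=
  relaxed_price_density_convergence_general Q hQint Nl hNl N hN lam0 hjoint hZpos
end
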